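/- arXiv:1905.10068 — 4 statements merged into one kernel-verified Lean document; each statement's English description precedes it below -/
import Mathlib

section
/- Let R be an integral domain, let B be an integral domain containing R, and let D be a nontrivial locally finite iterative higher R-derivation (lfihd) on B. If D has a slice s ∈ B, then B is generated as a B^D-algebra by s (i.e. B = B^D[s]) and s is transcendental over B^D. -/
open MvPolynomial

/-- A higher `R`-derivation on `B`: a family of `R`-linear maps `D ℓ : B → B`
with `D 0 = id` and the Leibniz rule `D ℓ (a*b) = ∑_{i+j=ℓ} D i a * D j b`. -/
structure HigherDerivation (R B : Type*) [CommRing R] [CommRing B] [Algebra R B] where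
  D : ℕ → B →ₗ[R] B
  D_zero : D 0 = LinearMap.id
  leibniz : ∀ (ℓ : ℕ) (a b : B),
    D ℓ (a * b) = ∑ ij ∈ Finset.HasAntidiagonal.antidiagonal ℓ, D ij.1 a * D ij.2 b

namespace HigherDerivation

variable {R B : Type*} [CommRing R] [CommRing B] [Algebra R B]

/-- The kernel `B^D = ⋂_{ℓ ≥ 1} ker D_ℓ` of a higher derivation. -/
def kerSet (hd : HigherDerivation R B) : Set B :=
  {b | ∀ ℓ : ℕ, 1 ≤ ℓ → hd.D ℓ b = 0}

/-- `D` is locally finite. -/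
def LocallyFinite (hd : HigherDerivation R B) : Prop :=
  ∀ b : B, ∃ N : ℕ, ∀ ℓ : ℕ, N ≤ ℓ → hd.D ℓ b = 0

/-- `D` is iterative: `D_i ∘ D_j = binom(i+j, j) • D_{i+j}`. -/
def Iterative (hd : HigherDerivation R B) : Prop :=
  ∀ (i j : ℕ) (b : B), hd.D i (hd.D j b) = (i + j).choose j • hd.D (i + j) b

/-- `s` is a slice of `D`: the `t`-degree `N ≥ 1` of `φ_D(s)` is minimal among the
`t`-degrees of `φ_D(b)` for `b ∉ B^D`, and the leading `t`-coefficient `D N s` of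
`φ_D(s)` is a unit of `B` (in particular `s ∉ B^D`). -/
def IsSlice (hd : HigherDerivation R B) (s : B) : Prop :=
  ∃ N : ℕ, 1 ≤ N ∧ hd.D N s ≠ 0 ∧ (∀ ℓ : ℕ, N < ℓ → hd.D ℓ s = 0) ∧
    IsUnit (hd.D N s) ∧ ∀ b : B, b ∉ hd.kerSet → ∃ m : ℕ, N ≤ m ∧ hd.D m b ≠ 0

end HigherDerivation

/-!
Let `N = deg_t φ_D(s)` and `u = D_N s`. If `b` has `t`-degree `d` and `0 < r < N`, then
`D_{d-r} b` has `t`-degree at most `r < N`, so it lies in `B^D`, and applying `D_r` gives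
`binom(d, r) D_d b = 0` by iterativity. Hence the characteristic of `B` divides `binom(d, r)`;
taking `b = s` makes `N` a power of the characteristic (or `1`), and Lucas' theorem then gives
`N ∣ d` for every element. So the top coefficient of `φ_D(b)`, in degree `N k`, is cancelled by
subtracting `D_{Nk}(b) u^(-k) s^k`, and induction on `d` yields `B = B^D[s]`. Conversely
`φ_D(P(s))` has degree `N deg P` with leading coefficient `lc(P) u^(deg P)`, so `P(s) ≠ 0`
for `P ≠ 0`.
-/

theorem Nat.Prime.not_dvd_choose_mod_pow {p : ℕ} (hp : p.Prime) (e d : ℕ) :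
    ¬ p ∣ d.choose (d % p ^ e) := by
  have : Fact p.Prime := ⟨hp⟩
  induction e generalizing d with
  | zero =>
    rw [pow_zero, Nat.mod_one, Nat.choose_zero_right, Nat.dvd_one]
    exact hp.one_lt.ne'
  | succ e ih =>
    intro hdvd
    have hlucas := Choose.choose_modEq_choose_mod_mul_choose_div_nat (n := d)
      (k := d % p ^ (e + 1)) (p := p)
    have hdiv : d % p ^ (e + 1) / p = d / p % p ^ e := by
      rw [← Nat.mod_mul_right_div_self, ← pow_succ']
    rw [Nat.mod_mod_of_dvd d (dvd_pow_self p e.succ_ne_zero), hdiv, Nat.choose_self,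
      one_mul] at hlucas
    exact ih (d / p)
      (Nat.modEq_zero_iff_dvd.1 (hlucas.symm.trans (Nat.modEq_zero_iff_dvd.2 hdvd)))

/-- For `p = 0` the hypothesis on `N` forces `N = 1`; otherwise `N` is a power of the least prime
factor of `p`, and the hypothesis on `d` at `r = d % N` contradicts Lucas' theorem. -/
theorem Nat.dvd_of_forall_dvd_choose {p N d : ℕ} (hp : p ≠ 1) (hN : 0 < N)
    (hNp : ∀ r, 0 < r → r < N → p ∣ N.choose r)
    (hdp : ∀ r, 0 < r → r < N → p ∣ d.choose r) : N ∣ d := by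
  rcases eq_or_ne p 0 with rfl | hp0
  · have hN1 : N = 1 := by
      by_contra hN1
      have := hNp 1 one_pos (by omega)
      rw [Nat.choose_one_right, zero_dvd_iff] at this
      omega
    exact hN1 ▸ one_dvd d
  · have hq : p.minFac.Prime := Nat.minFac_prime hp
    have : Fact p.minFac.Prime := ⟨hq⟩
    have hNq : N = p.minFac ^ multiplicity p.minFac N :=
      Choose.eq_pow_multiplicity_of_choose_modEq_zero_nat hN fun r hr => by
        rw [Finset.mem_Icc] at hr
        exact Nat.modEq_zero_iff_dvd.2 ((Nat.minFac_dvd p).trans (hNp r (by omega) (by omega)))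
    refine Nat.dvd_of_mod_eq_zero (by_contra fun hd => ?_)
    have := (Nat.minFac_dvd p).trans (hdp (d % N) (by omega) (Nat.mod_lt d hN))
    rw [hNq] at this
    exact hq.not_dvd_choose_mod_pow _ d this

namespace HigherDerivation

variable {R B : Type*} [CommRing R] [CommRing B] [Algebra R B] (hd : HigherDerivation R B)

/-- `deg_t φ_D(b) ≤ d`. -/
def DegreeLE (b : B) (d : ℕ) : Prop :=
  ∀ ℓ : ℕ, d < ℓ → hd.D ℓ b = 0

theorem D_zero_apply (b : B) : hd.D 0 b = b := by
  rw [hd.D_zero]; rfl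

/-- `φ_D(b)`. -/
def series (b : B) : PowerSeries B :=
  PowerSeries.mk fun ℓ => hd.D ℓ b

theorem series_mul (a b : B) : hd.series (a * b) = hd.series a * hd.series b := by
  ext ℓ
  simp only [series, PowerSeries.coeff_mk, PowerSeries.coeff_mul, hd.leibniz]

/-- `φ_D(1)` is idempotent, and a unit since its constant coefficient is `1`. -/
theorem series_one : hd.series 1 = 1 := by
  have hunit : IsUnit (hd.series 1) := by
    rw [PowerSeries.isUnit_iff_constantCoeff, ← PowerSeries.coeff_zero_eq_constantCoeff_apply,
      series, PowerSeries.coeff_mk, D_zero_apply]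
    exact isUnit_one
  refine (IsIdempotentElem.iff_eq_one_of_isUnit hunit).1 ?_
  rw [IsIdempotentElem, ← series_mul, one_mul]

theorem D_one_apply {ℓ : ℕ} (hℓ : ℓ ≠ 0) : hd.D ℓ 1 = 0 := by
  simpa [series, hℓ] using congrArg (PowerSeries.coeff ℓ) hd.series_one

theorem series_eq_C_of_mem_kerSet {a : B} (ha : a ∈ hd.kerSet) :
    hd.series a = PowerSeries.C a := by
  ext (_ | ℓ)
  · simp [series, D_zero_apply]
  · simp [series, ha (ℓ + 1) (Nat.succ_pos ℓ)]

theorem D_mul_of_mem_kerSet {a : B} (ha : a ∈ hd.kerSet) (b : B) (ℓ : ℕ) :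
    hd.D ℓ (a * b) = a * hd.D ℓ b := by
  have h := congrArg (PowerSeries.coeff ℓ) (hd.series_mul a b)
  rwa [hd.series_eq_C_of_mem_kerSet ha, PowerSeries.coeff_C_mul, series, series,
    PowerSeries.coeff_mk, PowerSeries.coeff_mk] at h

def kerSubring : Subring B where
  carrier := hd.kerSet
  zero_mem' _ _ := map_zero _
  one_mem' _ hℓ := hd.D_one_apply (by omega)
  add_mem' ha hb ℓ hℓ := by rw [map_add, ha ℓ hℓ, hb ℓ hℓ, add_zero]
  mul_mem' ha hb ℓ hℓ := by rw [hd.D_mul_of_mem_kerSet ha, hb ℓ hℓ, mul_zero]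
  neg_mem' ha ℓ hℓ := by rw [map_neg, ha ℓ hℓ, neg_zero]

theorem mem_kerSet_of_mul_eq_one {u v : B} (hu : u ∈ hd.kerSet) (huv : u * v = 1) :
    v ∈ hd.kerSet := fun ℓ hℓ =>
  calc hd.D ℓ v = v * (u * hd.D ℓ v) := by rw [← mul_assoc, mul_comm v, huv, one_mul]
    _ = 0 := by rw [← hd.D_mul_of_mem_kerSet hu, huv, hd.D_one_apply (by omega), mul_zero]

variable {hd}

theorem DegreeLE.mul {a b : B} {m n : ℕ} (ha : hd.DegreeLE a m) (hb : hd.DegreeLE b n) :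
    hd.DegreeLE (a * b) (m + n) := by
  intro ℓ hℓ
  rw [hd.leibniz]
  refine Finset.sum_eq_zero fun ij hij => ?_
  rw [Finset.HasAntidiagonal.mem_antidiagonal] at hij
  rcases lt_or_ge m ij.1 with h | h
  · rw [ha _ h, zero_mul]
  · rw [hb _ (by omega), mul_zero]

theorem D_add_mul_of_degreeLE {a b : B} {m n : ℕ} (ha : hd.DegreeLE a m)
    (hb : hd.DegreeLE b n) : hd.D (m + n) (a * b) = hd.D m a * hd.D n b := by
  rw [hd.leibniz,
    Finset.sum_eq_single_of_mem (m, n) (Finset.HasAntidiagonal.mem_antidiagonal.2 rfl)]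
  rintro ⟨i, j⟩ hij hne
  rw [Finset.HasAntidiagonal.mem_antidiagonal] at hij
  rcases lt_trichotomy i m with h | rfl | h
  · rw [hb j (by omega), mul_zero]
  · exact (hne (Prod.ext rfl (show j = n by omega))).elim
  · rw [ha i h, zero_mul]

theorem DegreeLE.pow {s : B} {N : ℕ} (hs : hd.DegreeLE s N) (k : ℕ) :
    hd.DegreeLE (s ^ k) (N * k) := by
  induction k with
  | zero => exact fun ℓ hℓ => by rw [pow_zero, hd.D_one_apply (by omega)]
  | succ k ih => rw [pow_succ, Nat.mul_succ]; exact ih.mul hs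

theorem D_mul_pow_of_degreeLE {s : B} {N : ℕ} (hs : hd.DegreeLE s N) (k : ℕ) :
    hd.D (N * k) (s ^ k) = hd.D N s ^ k := by
  induction k with
  | zero => rw [pow_zero, pow_zero, Nat.mul_zero, D_zero_apply]
  | succ k ih => rw [pow_succ, pow_succ, Nat.mul_succ, D_add_mul_of_degreeLE (hs.pow k) hs, ih]

theorem DegreeLE.D (hit : hd.Iterative) {b : B} {d : ℕ} (hb : hd.DegreeLE b d) (j : ℕ) :
    hd.DegreeLE (hd.D j b) (d - j) := fun ℓ hℓ => by
  rw [hit, hb (ℓ + j) (by omega), smul_zero]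

theorem D_mem_kerSet_of_degreeLE (hit : hd.Iterative) {b : B} {d : ℕ}
    (hb : hd.DegreeLE b d) : hd.D d b ∈ hd.kerSet := fun ℓ hℓ =>
  hb.D hit d ℓ (by omega)

theorem D_mul_natDegree_eval {s : B} {N : ℕ} (hN : 0 < N) (hs : hd.DegreeLE s N)
    (P : Polynomial B) (hP : ∀ i, P.coeff i ∈ hd.kerSet) :
    hd.D (N * P.natDegree) (P.eval s) = P.leadingCoeff * hd.D N s ^ P.natDegree := by
  rw [Polynomial.eval_eq_sum_range, map_sum,
    Finset.sum_eq_single_of_mem _ (Finset.self_mem_range_succ _)]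
  · rw [hd.D_mul_of_mem_kerSet (hP _), D_mul_pow_of_degreeLE hs]
    rfl
  · intro i hi hik
    have hilt : i < P.natDegree := by
      rw [Finset.mem_range] at hi
      omega
    rw [hd.D_mul_of_mem_kerSet (hP i), hs.pow i _ ((Nat.mul_lt_mul_left hN).2 hilt), mul_zero]

theorem eq_zero_of_eval_eq_zero [NoZeroDivisors B] {s : B} {N : ℕ} (hN : 0 < N)
    (hs : hd.DegreeLE s N) (hsN : hd.D N s ≠ 0) (P : Polynomial B)
    (hP : ∀ i, P.coeff i ∈ hd.kerSet) (hPs : P.eval s = 0) : P = 0 := by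
  have h := D_mul_natDegree_eval hN hs P hP
  rw [hPs, map_zero] at h
  exact Polynomial.leadingCoeff_eq_zero.1
    ((mul_eq_zero.1 h.symm).resolve_right (pow_ne_zero _ hsN))

theorem exists_mem_kerSet_degreeLE_sub_mul_pow (hit : hd.Iterative) {s v b : B} {N d k : ℕ}
    (hs : hd.DegreeLE s N) (huv : hd.D N s * v = 1) (hb : hd.DegreeLE b (d + 1))
    (hk : d + 1 = N * k) : ∃ a ∈ hd.kerSet, hd.DegreeLE (b - a * s ^ k) d := by
  have hv : v ∈ hd.kerSubring :=
    hd.mem_kerSet_of_mul_eq_one (D_mem_kerSet_of_degreeLE hit hs) huv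
  have hbk : hd.D (d + 1) b ∈ hd.kerSubring := D_mem_kerSet_of_degreeLE hit hb
  have ha : hd.D (d + 1) b * v ^ k ∈ hd.kerSubring := mul_mem hbk (pow_mem hv k)
  refine ⟨_, ha, fun ℓ hℓ => ?_⟩
  rw [map_sub, hd.D_mul_of_mem_kerSet ha]
  rcases (show d + 1 ≤ ℓ from hℓ).eq_or_lt with rfl | hlt
  · rw [hk, D_mul_pow_of_degreeLE hs, mul_assoc, ← mul_pow, mul_comm v, huv, one_pow,
      mul_one, sub_self]
  · rw [hb ℓ hlt, hs.pow k ℓ (hk ▸ hlt), mul_zero, sub_self]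

theorem exists_polynomial_eval_eq (hit : hd.Iterative) (hlf : hd.LocallyFinite) {s v : B}
    {N : ℕ} (hs : hd.DegreeLE s N) (huv : hd.D N s * v = 1)
    (hdvd : ∀ (b : B) (d : ℕ), hd.DegreeLE b d → hd.D d b ≠ 0 → N ∣ d) (b : B) :
    ∃ P : Polynomial B, (∀ i, P.coeff i ∈ hd.kerSet) ∧ P.eval s = b := by
  obtain ⟨M, hM⟩ := hlf b
  suffices h : ∀ (d : ℕ) (b : B), hd.DegreeLE b d →
      ∃ P : Polynomial B, (∀ i, P.coeff i ∈ hd.kerSet) ∧ P.eval s = b from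
    h M b fun ℓ hℓ => hM ℓ hℓ.le
  intro d
  induction d with
  | zero =>
    intro b hb
    refine ⟨Polynomial.C b, fun i => ?_, Polynomial.eval_C⟩
    rw [Polynomial.coeff_C]
    split_ifs
    exacts [hb, zero_mem hd.kerSubring]
  | succ d ih =>
    intro b hb
    by_cases htop : hd.D (d + 1) b = 0
    · refine ih b fun ℓ hℓ => ?_
      rcases (show d + 1 ≤ ℓ from hℓ).eq_or_lt with rfl | hlt
      exacts [htop, hb ℓ hlt]
    obtain ⟨k, hk⟩ := hdvd b (d + 1) hb htop
    obtain ⟨a, ha, hba⟩ := exists_mem_kerSet_degreeLE_sub_mul_pow hit hs huv hb hk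
    obtain ⟨P, hP, hPs⟩ := ih _ hba
    refine ⟨P + Polynomial.C a * Polynomial.X ^ k, fun i => ?_, by simp [hPs]⟩
    rw [Polynomial.coeff_add, Polynomial.coeff_C_mul_X_pow]
    split_ifs
    exacts [hd.kerSubring.add_mem (hP i) ha, by simpa using hP i]

section Slice

variable {N : ℕ} (hmin : ∀ b : B, b ∉ hd.kerSet → ∃ m : ℕ, N ≤ m ∧ hd.D m b ≠ 0)
include hmin

theorem mem_kerSet_of_degreeLE_of_lt {b : B} {r : ℕ} (hb : hd.DegreeLE b r) (hr : r < N) :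
    b ∈ hd.kerSet := by
  by_contra h
  obtain ⟨m, hm, hne⟩ := hmin b h
  exact hne (hb m (by omega))

theorem choose_smul_D_eq_zero (hit : hd.Iterative) {b : B} {d r : ℕ} (hb : hd.DegreeLE b d)
    (hr0 : 0 < r) (hrN : r < N) (hrd : r ≤ d) : d.choose r • hd.D d b = 0 := by
  have hker := mem_kerSet_of_degreeLE_of_lt hmin (hb.D hit (d - r)) (by omega)
  have h := hit r (d - r) b
  rwa [hker r hr0, Nat.add_sub_cancel' hrd, Nat.choose_symm hrd, eq_comm] at h

theorem ringChar_dvd_choose [NoZeroDivisors B] (hit : hd.Iterative) {b : B} {d r : ℕ}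
    (hb : hd.DegreeLE b d) (hbd : hd.D d b ≠ 0) (hr0 : 0 < r) (hrN : r < N) :
    ringChar B ∣ d.choose r := by
  rcases le_or_gt r d with hrd | hdr
  · have h := choose_smul_D_eq_zero hmin hit hb hr0 hrN hrd
    rw [nsmul_eq_mul] at h
    exact (ringChar.spec B _).1 ((mul_eq_zero.1 h).resolve_right hbd)
  · rw [Nat.choose_eq_zero_of_lt hdr]
    exact dvd_zero _

theorem dvd_of_degreeLE [IsDomain B] (hit : hd.Iterative) {s b : B} {d : ℕ} (hN : 0 < N)
    (hs : hd.DegreeLE s N) (hsN : hd.D N s ≠ 0) (hb : hd.DegreeLE b d) (hbd : hd.D d b ≠ 0) :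
    N ∣ d :=
  Nat.dvd_of_forall_dvd_choose CharP.ringChar_ne_one hN
    (fun _ hr0 hrN => ringChar_dvd_choose hmin hit hs hsN hr0 hrN)
    (fun _ hr0 hrN => ringChar_dvd_choose hmin hit hb hbd hr0 hrN)

end Slice

end HigherDerivation

theorem stmt0_general {R B : Type*} [CommRing R] [CommRing B] [IsDomain B]
    [Algebra R B]
    (hd : HigherDerivation R B) (hlf : hd.LocallyFinite) (hit : hd.Iterative)
    (s : B) (hs : hd.IsSlice s) :
    (∀ b : B, ∃ P : Polynomial B,
        (∀ i : ℕ, P.coeff i ∈ hd.kerSet) ∧ Polynomial.eval s P = b) ∧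
    (∀ P : Polynomial B,
        (∀ i : ℕ, P.coeff i ∈ hd.kerSet) → Polynomial.eval s P = 0 → P = 0) := by
  obtain ⟨N, hN, hsN, hsdeg, hunit, hmin⟩ := hs
  obtain ⟨v, huv⟩ := hunit.exists_right_inv
  exact ⟨HigherDerivation.exists_polynomial_eval_eq hit hlf hsdeg huv
      fun _ _ hb hbd => HigherDerivation.dvd_of_degreeLE hmin hit hN hsdeg hsN hb hbd,
    HigherDerivation.eq_zero_of_eval_eq_zero hN hsdeg hsN⟩

/-- cf. Miyanishi. Let `R ⊆ B` be integral domains and let `D` be a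
nontrivial locally finite iterative higher `R`-derivation on `B` with a slice `s`.
Then `B = B^D[s]` and `s` is transcendental over `B^D`. -/
theorem stmt0 {R B : Type*} [CommRing R] [IsDomain R] [CommRing B] [IsDomain B]
    [Algebra R B] (hinj : Function.Injective (algebraMap R B))
    (hd : HigherDerivation R B) (hlf : hd.LocallyFinite) (hit : hd.Iterative)
    (hnt : ∃ b : B, b ∉ hd.kerSet) (s : B) (hs : hd.IsSlice s) :
    (∀ b : B, ∃ P : Polynomial B,
        (∀ i : ℕ, P.coeff i ∈ hd.kerSet) ∧ Polynomial.eval s P = b) ∧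
    (∀ P : Polynomial B,
        (∀ i : ℕ, P.coeff i ∈ hd.kerSet) → Polynomial.eval s P = 0 → P = 0) :=
  stmt0_general hd hlf hit s hs
end

section
/- Let R be an integral domain containing a prime field, and let f ∈ R[x,y] be a variable over R, i.e. there exists g ∈ R[x,y] such that f and g are algebraically independent over R and R[f,g] = R[x,y]. Then the natural inclusion R[f] → R[x,y] (of the R-subalgebra generated by f) is smooth. -/
/-! Put `A = R[f]`. By algebraic independence `g` is transcendental over `A`, and `A[g] = R[f, g]`
is everything, so `R[x, y] ≅ A[X]` as `A`-algebras; a polynomial ring is formally smooth. -/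

theorem Algebra.adjoin_adjoin_singleton_eq_top {R A : Type*} [CommSemiring R] [CommSemiring A]
    [Algebra R A] {f g : A} (h : Algebra.adjoin R {f, g} = ⊤) :
    Algebra.adjoin (Algebra.adjoin R {f}) {g} = ⊤ := by
  apply Subalgebra.restrictScalars_injective R
  rw [Subalgebra.restrictScalars_top, ← Algebra.adjoin_union_eq_adjoin_adjoin,
    Set.singleton_union, h]

theorem Algebra.FormallySmooth.of_transcendental_of_adjoin_eq_top {A B : Type*} [CommRing A]
    [CommRing B] [Algebra A B] {g : B} (ht : Transcendental A g)
    (hg : Algebra.adjoin A {g} = ⊤) : Algebra.FormallySmooth A B :=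
  .of_equiv <| (Polynomial.algEquivOfTranscendental A g ht).trans <|
    (Subalgebra.equivOfEq _ _ hg).trans Subalgebra.topEquiv

theorem stmt2_general {R : Type u} [CommRing R]
    (f : MvPolynomial (Fin 2) R)
    (hvar : ∃ g : MvPolynomial (Fin 2) R,
      AlgebraicIndependent R ![f, g] ∧ Algebra.adjoin R {f, g} = ⊤) :
    Algebra.FormallySmooth (Algebra.adjoin R {f}) (MvPolynomial (Fin 2) R) := by
  obtain ⟨g, hind, hgen⟩ := hvar
  have htrans : Transcendental (Algebra.adjoin R {f}) g := by
    have := hind.transcendental_adjoin (s := {0}) (i := 1) (by simp)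
    rwa [Set.image_singleton] at this
  exact .of_transcendental_of_adjoin_eq_top htrans (Algebra.adjoin_adjoin_singleton_eq_top hgen)

/-- Let `R` be an integral domain containing a prime field (i.e.
containing a subring which is a field), and let `f ∈ R[x,y]` be a variable over `R`:
there is `g` with `f, g` algebraically independent over `R` and `R[f,g] = R[x,y]`.
Then the natural inclusion `R[f] → R[x,y]` is smooth (formally smooth). -/
theorem stmt2 {R : Type u} [CommRing R] [IsDomain R]
    (hprime : ∃ K : Subring R, IsField K)
    (f : MvPolynomial (Fin 2) R)
    (hvar : ∃ g : MvPolynomial (Fin 2) R,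
      AlgebraicIndependent R ![f, g] ∧ Algebra.adjoin R {f, g} = ⊤) :
    Algebra.FormallySmooth (Algebra.adjoin R {f}) (MvPolynomial (Fin 2) R) :=
  stmt2_general f hvar
end

section
/- Let R be an integral domain containing a prime field and let R[x,y] be the polynomial ring in two variables over R. The natural inclusion R[xy] → R[x,y] of the R-subalgebra generated by the element xy is not smooth. -/
/-!
If `B` is formally smooth over `A ∋ t` and `x * y = t` in `B`, then every `A`-algebra map
`u : B → B ⧸ I` killing `x` and `y` lifts to `v : B → B ⧸ I²`; then `v x`, `v y` lie in the
square-zero ideal `I ⧸ I²`, so `t = v (x * y) = 0`, i.e. `t ∈ I²`. For `B = R[x,y]`,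
`A = R[xy]` and `I = (xy)`, the map `b ↦ b(0,0) mod (xy)` is such a `u`, since it agrees with
the quotient map on `R[xy]`; but `xy ∉ (xy)²` because `xy` is not a unit.
-/

open MvPolynomial

universe u

theorem Algebra.FormallySmooth.mul_mem_sq_of_map_eq_zero {A B : Type*} [CommRing A] [CommRing B]
    [Algebra A B] [Algebra.FormallySmooth A B] (I : Ideal B) (u : B →ₐ[A] B ⧸ I) {x y : B}
    (hx : u x = 0) (hy : u y = 0) (hxy : x * y ∈ Set.range (algebraMap A B)) :
    x * y ∈ I ^ 2 := by
  have hle : I ^ 2 ≤ I := Ideal.pow_le_self two_ne_zero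
  let π := Ideal.Quotient.factorₐ A hle
  have hπ : Function.Surjective π := Ideal.Quotient.factor_surjective hle
  have hker : RingHom.ker (π : B ⧸ I ^ 2 →+* B ⧸ I) = I.map (Ideal.Quotient.mk (I ^ 2)) :=
    Ideal.Quotient.factor_ker hle
  have hsq : I.map (Ideal.Quotient.mk (I ^ 2)) ^ 2 = ⊥ := by
    rw [← Ideal.map_pow, Ideal.map_quotient_self]
  let v := Algebra.FormallySmooth.liftOfSurjective u π hπ ⟨2, by rw [hker, hsq]; rfl⟩
  have hv_mem {z : B} (hz : u z = 0) : v z ∈ I.map (Ideal.Quotient.mk (I ^ 2)) := by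
    rw [← hker, RingHom.mem_ker]
    exact (Algebra.FormallySmooth.liftOfSurjective_apply u π hπ _ z).trans hz
  obtain ⟨a, ha⟩ := hxy
  have hmk : Ideal.Quotient.mk (I ^ 2) (x * y) = v (x * y) := by
    rw [← ha, ← Ideal.Quotient.algebraMap_eq, ← IsScalarTower.algebraMap_apply, v.commutes]
  have hv_xy := Ideal.mul_mem_mul (hv_mem hx) (hv_mem hy)
  rw [← pow_two, hsq, Ideal.mem_bot, ← map_mul, ← hmk] at hv_xy
  exact Ideal.Quotient.eq_zero_iff_mem.mp hv_xy

namespace MvPolynomial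

variable {R : Type*} [CommRing R]

theorem algebraMap_constantCoeff_eq_mk_of_mem_adjoin {a : MvPolynomial (Fin 2) R}
    (ha : a ∈ Algebra.adjoin R {X 0 * X 1}) :
    algebraMap R (MvPolynomial (Fin 2) R ⧸ Ideal.span {X 0 * X 1}) (constantCoeff a) =
      Ideal.Quotient.mk _ a := by
  have := AlgHom.adjoin_le_equalizer ((Algebra.ofId R _).comp (aeval fun _ => 0))
    (Ideal.Quotient.mkₐ R (Ideal.span {X 0 * X 1})) ?_ ha
  · simpa [aeval_zero'] using this
  rintro _ rfl
  simp

noncomputable def constantCoeffModXMulX :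
    MvPolynomial (Fin 2) R →ₐ[Algebra.adjoin R {(X 0 * X 1 : MvPolynomial (Fin 2) R)}]
      MvPolynomial (Fin 2) R ⧸ Ideal.span {(X 0 * X 1 : MvPolynomial (Fin 2) R)} where
  toRingHom := (algebraMap R _).comp constantCoeff
  commutes' a := algebraMap_constantCoeff_eq_mk_of_mem_adjoin (R := R) a.2

theorem X_mul_X_notMem_span_sq [IsDomain R] :
    (X 0 * X 1 : MvPolynomial (Fin 2) R) ∉ Ideal.span {X 0 * X 1} ^ 2 := by
  intro h
  rw [Ideal.span_singleton_pow, Ideal.mem_span_singleton, pow_two, ← mul_one (X 0 * X 1),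
    mul_assoc, mul_dvd_mul_iff_left (mul_ne_zero (X_ne_zero _) (X_ne_zero _)), mul_one] at h
  simpa using (isUnit_of_dvd_one h).map (constantCoeff (R := R) (σ := Fin 2))

end MvPolynomial

theorem stmt4_general {R : Type u} [CommRing R] [IsDomain R] :
    ¬ Algebra.FormallySmooth
      (Algebra.adjoin R {(X 0 * X 1 : MvPolynomial (Fin 2) R)})
      (MvPolynomial (Fin 2) R) := by
  intro _
  refine X_mul_X_notMem_span_sq (R := R) <|
    Algebra.FormallySmooth.mul_mem_sq_of_map_eq_zero _ constantCoeffModXMulX (x := X 0) (y := X 1)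
      ?_ ?_ ⟨⟨_, Algebra.self_mem_adjoin_singleton R _⟩, rfl⟩
  all_goals simp [constantCoeffModXMulX]

/-- Let `R` be an integral domain containing a prime field (i.e.
containing a subring which is a field). The natural inclusion `R[xy] → R[x,y]` of the
`R`-subalgebra generated by `xy` is not smooth (formally smooth). -/
theorem stmt4 {R : Type u} [CommRing R] [IsDomain R]
    (hprime : ∃ K : Subring R, IsField K) :
    ¬ Algebra.FormallySmooth
      (Algebra.adjoin R {(X 0 * X 1 : MvPolynomial (Fin 2) R)})
      (MvPolynomial (Fin 2) R) :=
  stmt4_general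
end

section
/- Let R be an integral domain of characteristic p > 0, let B = R[x_1,…,x_n] be the polynomial ring in n variables over R, and let f_1,…,f_{n-1} ∈ B with f_i ∉ R[x_1^p,…,x_n^p] for each i (i.e. no f_i lies in the R-subalgebra generated by x_1^p,…,x_n^p). Set F = (f_1,…,f_{n-1}) and assume f_1,…,f_{n-1} are algebraically independent over R. If the natural inclusion R[F] = R[f_1,…,f_{n-1}] → B is smooth, then there exists a higher R-derivation D on B of Jacobian type determined by F. -/
open MvPolynomial

/-- The Jacobian derivation `Δ_F` on `R[x_0, …, x_n]` determined by the `n`-tuple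
`F = (f 0, …, f (n-1))`: `Δ_F(g)` is the determinant of the `(n+1) × (n+1)` matrix
whose first `n` rows are the partials of the `f i` and last row the partials of `g`. -/
noncomputable def jacobianDerivF {R : Type*} [CommRing R] {n : ℕ}
    (f : Fin n → MvPolynomial (Fin (n + 1)) R) (g : MvPolynomial (Fin (n + 1)) R) :
    MvPolynomial (Fin (n + 1)) R :=
  Matrix.det (Matrix.of fun i j : Fin (n + 1) =>
    Fin.lastCases (pderiv j g) (fun i' : Fin n => pderiv j (f i')) i)

/-- `D` is of Jacobian type determined by `F = (f 0, …, f (n-1))` (in characteristic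
`p`): the `f i` are algebraically independent over `R`, `f i ∈ B^D`, `D_1 = Δ_F`, and
`ℓ! • D_ℓ = Δ_F^[ℓ]` for `0 ≤ ℓ ≤ p-1`. -/
def IsJacobianTypeF {R : Type*} [CommRing R] {n : ℕ} (p : ℕ)
    (hd : HigherDerivation R (MvPolynomial (Fin (n + 1)) R))
    (f : Fin n → MvPolynomial (Fin (n + 1)) R) : Prop :=
  AlgebraicIndependent R f ∧ (∀ i, f i ∈ hd.kerSet) ∧
    (∀ g, hd.D 1 g = jacobianDerivF f g) ∧
    ∀ ℓ : ℕ, ℓ < p → ∀ g, ℓ.factorial • hd.D ℓ g = (jacobianDerivF f)^[ℓ] g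

/-- `F = (f 0, …, f (n-1))` is extendable: there is `s` such that
`f 0, …, f (n-1), s` are algebraically independent over `R` and generate
`R[x_0, …, x_n]` as an `R`-algebra. -/
def Extendable {R : Type*} [CommRing R] {n : ℕ}
    (f : Fin n → MvPolynomial (Fin (n + 1)) R) : Prop :=
  ∃ s : MvPolynomial (Fin (n + 1)) R,
    AlgebraicIndependent R (Fin.snoc f s) ∧
      Algebra.adjoin R (Set.range (Fin.snoc f s)) = ⊤

universe u

/-!
`Δ_F` is an `R`-derivation of `B` vanishing on `A = R[F]`. As `ℓ!` is a unit for `ℓ < p`,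
the divided-power Leibniz rule makes the truncated exponential
`b ↦ ∑_{ℓ<p} Δ_F^ℓ(b)/ℓ! · t^ℓ` an `A`-algebra map `B → B⟦t⟧/(t^p)`. Since `B⟦t⟧` is
`(t^p)`-adically complete, formal smoothness of `B` over `A` lifts it to an `A`-algebra map
`φ : B → B⟦t⟧`; the coefficients of `φ` form a higher derivation, which kills `A` because
`φ` is `A`-linear, and whose components below `p` are the divided powers of `Δ_F`.
-/

open scoped PowerSeries
open Finset

theorem IsAdicComplete.pow {R M : Type*} [CommRing R] [AddCommGroup M] [Module R M]
    {I : Ideal R} [IsAdicComplete I M] {k : ℕ} (hk : k ≠ 0) : IsAdicComplete (I ^ k) M := by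
  have hkn : ∀ n, n ≤ k * n := fun n => Nat.le_mul_of_pos_left n (Nat.pos_of_ne_zero hk)
  have hle : ∀ n, ((I ^ k) ^ n • ⊤ : Submodule R M) ≤ I ^ n • ⊤ := fun n => by
    rw [← pow_mul]
    exact Submodule.pow_smul_top_le I M (hkn n)
  refine { haus' := fun x hx => IsHausdorff.haus' (I := I) x fun n => (hx n).mono (hle n),
           prec' := fun f hf => ?_ }
  obtain ⟨L, hL⟩ := IsPrecomplete.prec' (I := I) f fun hmn => (hf hmn).mono (hle _)
  refine ⟨L, fun n => (hf (hkn n)).trans ?_⟩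
  rw [← pow_mul]
  exact hL (k * n)

theorem isUnit_natCast_factorial_of_lt {R : Type*} [CommRing R] {p : ℕ} [CharP R p]
    (hp : p.Prime) {ℓ : ℕ} (hℓ : ℓ < p) : IsUnit (ℓ.factorial : R) :=
  (CharP.isUnit_natCast_iff hp).2 fun h => (hp.dvd_factorial.1 h).not_gt hℓ

namespace HigherDerivation

variable {R B : Type*} [CommRing R] [CommRing B] [Algebra R B]

noncomputable def ofAlgHom (φ : B →ₐ[R] B⟦X⟧) (hφ : ∀ b, PowerSeries.constantCoeff (φ b) = b) :
    HigherDerivation R B where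
  D ℓ := ((PowerSeries.coeff ℓ).restrictScalars R).comp φ.toLinearMap
  D_zero := LinearMap.ext fun b => (PowerSeries.coeff_zero_eq_constantCoeff_apply _).trans (hφ b)
  leibniz ℓ a b := by simp [PowerSeries.coeff_mul]

@[simp]
theorem ofAlgHom_D_apply (φ : B →ₐ[R] B⟦X⟧) (hφ : ∀ b, PowerSeries.constantCoeff (φ b) = b)
    (ℓ : ℕ) (b : B) : (ofAlgHom φ hφ).D ℓ b = PowerSeries.coeff ℓ (φ b) :=
  rfl

theorem mem_kerSet_ofAlgHom {φ : B →ₐ[R] B⟦X⟧} (hφ : ∀ b, PowerSeries.constantCoeff (φ b) = b)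
    {b : B} (hb : φ b = PowerSeries.C b) : b ∈ (ofAlgHom φ hφ).kerSet := fun ℓ hℓ => by
  rw [ofAlgHom_D_apply, hb, PowerSeries.coeff_C, if_neg (by omega)]

end HigherDerivation

namespace Derivation

variable {R B : Type*} [CommRing R] [CommRing B] [Algebra R B] (D : Derivation R B B)

theorem iterate_map_mul (n : ℕ) (a b : B) :
    D^[n] (a * b) = ∑ ij ∈ antidiagonal n, n.choose ij.1 • (D^[ij.1] a * D^[ij.2] b) := by
  induction n with
  | zero => simp
  | succ n ih =>
    rw [sum_antidiagonal_choose_succ_nsmul (fun i j => D^[i] a * D^[j] b),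
      Function.iterate_succ_apply', ih, map_sum, add_comm, ← sum_add_distrib]
    refine sum_congr rfl fun ij hij => ?_
    rw [HasAntidiagonal.mem_antidiagonal] at hij
    rw [map_nsmul, leibniz, smul_eq_mul, smul_eq_mul, ← hij, Nat.choose_symm_add, smul_add,
      Function.iterate_succ_apply', Function.iterate_succ_apply', mul_comm (D^[ij.2] b), add_comm]

/-- `Ring.inverse` is `0` on non-units: this is `D^ℓ / ℓ!` only when `ℓ!` is a unit of `R`. -/
noncomputable def dividedIterate (ℓ : ℕ) (b : B) : B :=
  Ring.inverse (ℓ.factorial : R) • D^[ℓ] b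

variable (p : ℕ)

noncomputable def truncExp (b : B) : B⟦X⟧ :=
  PowerSeries.mk fun ℓ => if ℓ < p then D.dividedIterate ℓ b else 0

theorem coeff_truncExp (ℓ : ℕ) (b : B) :
    PowerSeries.coeff ℓ (D.truncExp p b) = if ℓ < p then D.dividedIterate ℓ b else 0 :=
  PowerSeries.coeff_mk _ _

theorem truncExp_add (a b : B) : D.truncExp p (a + b) = D.truncExp p a + D.truncExp p b := by
  ext ℓ
  simp only [coeff_truncExp, map_add, dividedIterate, iterate_map_add, smul_add]
  split_ifs <;> simp

variable {D p}

theorem factorial_smul_dividedIterate (hfact : ∀ ℓ < p, IsUnit (ℓ.factorial : R)) {ℓ : ℕ}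
    (hℓ : ℓ < p) (b : B) : ℓ.factorial • D.dividedIterate ℓ b = D^[ℓ] b := by
  rw [dividedIterate, ← Nat.cast_smul_eq_nsmul R, smul_smul,
    Ring.mul_inverse_cancel _ (hfact ℓ hℓ), one_smul]

theorem dividedIterate_mul (hfact : ∀ ℓ < p, IsUnit (ℓ.factorial : R)) {ℓ : ℕ} (hℓ : ℓ < p)
    (a b : B) :
    D.dividedIterate ℓ (a * b) =
      ∑ ij ∈ antidiagonal ℓ, D.dividedIterate ij.1 a * D.dividedIterate ij.2 b := by
  rw [← (hfact ℓ hℓ).smul_left_cancel, Nat.cast_smul_eq_nsmul, Nat.cast_smul_eq_nsmul,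
    factorial_smul_dividedIterate hfact hℓ, iterate_map_mul, smul_sum]
  refine sum_congr rfl fun ij hij => ?_
  rw [HasAntidiagonal.mem_antidiagonal] at hij
  rw [← factorial_smul_dividedIterate hfact (ℓ := ij.1) (by omega),
    ← factorial_smul_dividedIterate hfact (ℓ := ij.2) (by omega), smul_mul_smul_comm, smul_smul,
    ← hij, ← Nat.add_choose_mul_factorial_mul_factorial, Nat.choose_symm_add]
  congr 1
  ring

theorem truncExp_eq_C (hp : 0 < p) {b : B} (hb : D b = 0) : D.truncExp p b = PowerSeries.C b := by
  ext ℓ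
  rw [coeff_truncExp, PowerSeries.coeff_C]
  rcases ℓ with _ | ℓ
  · simp [hp, dividedIterate]
  · simp [dividedIterate, Function.iterate_succ_apply, hb, iterate_map_zero]

theorem X_pow_dvd_truncExp_mul_sub (hfact : ∀ ℓ < p, IsUnit (ℓ.factorial : R)) (a b : B) :
    PowerSeries.X ^ p ∣ D.truncExp p (a * b) - D.truncExp p a * D.truncExp p b := by
  refine PowerSeries.X_pow_dvd_iff.2 fun ℓ hℓ => ?_
  rw [map_sub, PowerSeries.coeff_mul, coeff_truncExp, if_pos hℓ, dividedIterate_mul hfact hℓ,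
    sub_eq_zero]
  refine sum_congr rfl fun ij hij => ?_
  rw [HasAntidiagonal.mem_antidiagonal] at hij
  rw [coeff_truncExp, coeff_truncExp, if_pos (by omega), if_pos (by omega)]

noncomputable def truncExpₐ (hp : 0 < p) (hfact : ∀ ℓ < p, IsUnit (ℓ.factorial : R))
    (A : Subalgebra R B) (hA : ∀ a ∈ A, D a = 0) :
    B →ₐ[A] B⟦X⟧ ⧸ Ideal.span {(PowerSeries.X : B⟦X⟧)} ^ p where
  toFun b := Ideal.Quotient.mk _ (D.truncExp p b)
  map_one' := by rw [truncExp_eq_C hp D.map_one_eq_zero, map_one, map_one]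
  map_mul' a b := by
    rw [← map_mul, Ideal.Quotient.eq, Ideal.span_singleton_pow, Ideal.mem_span_singleton]
    exact X_pow_dvd_truncExp_mul_sub hfact a b
  map_zero' := by rw [truncExp_eq_C hp D.map_zero, map_zero, map_zero]
  map_add' a b := by rw [truncExp_add, map_add]
  commutes' a := by
    rw [show algebraMap A B a = a from rfl, truncExp_eq_C hp (hA a a.2)]
    rfl

theorem exists_higherDerivation_factorial_smul_eq_iterate (hp : 0 < p)
    (hfact : ∀ ℓ < p, IsUnit (ℓ.factorial : R)) (A : Subalgebra R B)
    [Algebra.FormallySmooth A B] (hA : ∀ a ∈ A, D a = 0) :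
    ∃ hd : HigherDerivation R B,
      (∀ a ∈ A, a ∈ hd.kerSet) ∧ ∀ ℓ < p, ∀ b, ℓ.factorial • hd.D ℓ b = D^[ℓ] b := by
  have : IsAdicComplete (Ideal.span {(PowerSeries.X : B⟦X⟧)} ^ p) B⟦X⟧ :=
    IsAdicComplete.pow hp.ne'
  obtain ⟨φ, hφ⟩ :=
    Algebra.FormallySmooth.exists_mkₐ_comp_eq_of_isAdicComplete (truncExpₐ hp hfact A hA)
  let ψ : B →ₐ[R] B⟦X⟧ := φ.restrictScalars R
  have hcoeff : ∀ ℓ < p, ∀ b, PowerSeries.coeff ℓ (ψ b) = D.dividedIterate ℓ b := by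
    intro ℓ hℓ b
    have h : Ideal.Quotient.mk _ (φ b) = Ideal.Quotient.mk _ (D.truncExp p b) :=
      AlgHom.congr_fun hφ b
    rw [Ideal.Quotient.eq, Ideal.span_singleton_pow, Ideal.mem_span_singleton] at h
    have := PowerSeries.X_pow_dvd_iff.1 h ℓ hℓ
    rwa [map_sub, coeff_truncExp, if_pos hℓ, sub_eq_zero] at this
  have hconst : ∀ b, PowerSeries.constantCoeff (ψ b) = b := fun b => by
    rw [← PowerSeries.coeff_zero_eq_constantCoeff_apply, hcoeff 0 hp]
    simp [dividedIterate]
  refine ⟨HigherDerivation.ofAlgHom ψ hconst,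
    fun a ha => HigherDerivation.mem_kerSet_ofAlgHom _ ?_, fun ℓ hℓ b => ?_⟩
  · exact (φ.commutes ⟨a, ha⟩).trans (PowerSeries.algebraMap_apply (A := B) (r := a))
  · rw [HigherDerivation.ofAlgHom_D_apply, hcoeff ℓ hℓ, factorial_smul_dividedIterate hfact hℓ]

end Derivation

section Jacobian

variable {R : Type*} [CommRing R] {n : ℕ} (f : Fin n → MvPolynomial (Fin (n + 1)) R)

noncomputable def jacobianCofactor (j : Fin (n + 1)) : MvPolynomial (Fin (n + 1)) R :=
  (-1) ^ (n + j : ℕ) * Matrix.det (Matrix.of fun i k : Fin n => pderiv (j.succAbove k) (f i))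

/-- Laplace expansion of `jacobianDerivF f` along its last row, which exhibits `Δ_F` as a
combination of partial derivatives and hence as a derivation. -/
noncomputable def jacobianDerivation :
    Derivation R (MvPolynomial (Fin (n + 1)) R) (MvPolynomial (Fin (n + 1)) R) :=
  ∑ j, jacobianCofactor f j • pderiv j

theorem coe_jacobianDerivation : ⇑(jacobianDerivation f) = jacobianDerivF f := by
  funext g
  rw [jacobianDerivF, Matrix.det_succ_row _ (Fin.last n), jacobianDerivation,
    ← Derivation.coeFnAddMonoidHom_apply, map_sum, Finset.sum_apply]
  refine Finset.sum_congr rfl fun j _ => ?_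
  simp [jacobianCofactor, Matrix.submatrix]
  ring

theorem jacobianDerivF_self (i : Fin n) : jacobianDerivF f (f i) = 0 :=
  Matrix.det_zero_of_row_eq (Fin.castSucc_lt_last i).ne (funext fun j => by simp)

end Jacobian

theorem stmt5_general {R : Type u} [CommRing R] [IsDomain R] (p : ℕ) (hp : 0 < p) [CharP R p]
    {n : ℕ} (f : Fin n → MvPolynomial (Fin (n + 1)) R)
    (hind : AlgebraicIndependent R f)
    (hsm : Algebra.FormallySmooth (Algebra.adjoin R (Set.range f))
      (MvPolynomial (Fin (n + 1)) R)) :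
    ∃ hd : HigherDerivation R (MvPolynomial (Fin (n + 1)) R),
      IsJacobianTypeF p hd f := by
  have : NeZero p := ⟨hp.ne'⟩
  have hprime : p.Prime := (CharP.char_is_prime_of_pos R p).out
  have hA : ∀ a ∈ Algebra.adjoin R (Set.range f), jacobianDerivation f a = 0 :=
    Derivation.eqOn_adjoin (D2 := 0) <| by
      rintro _ ⟨i, rfl⟩
      simp [coe_jacobianDerivation, jacobianDerivF_self]
  obtain ⟨hd, hker, hiter⟩ :=
    (jacobianDerivation f).exists_higherDerivation_factorial_smul_eq_iterate hp
      (fun ℓ => isUnit_natCast_factorial_of_lt hprime) _ hA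
  refine ⟨hd, hind, fun i => hker _ (Algebra.subset_adjoin ⟨i, rfl⟩), fun g => ?_, ?_⟩
  · simpa [coe_jacobianDerivation] using hiter 1 hprime.one_lt g
  · simpa [coe_jacobianDerivation] using hiter

/-- Proposition 2.5. Let `R` be an integral domain of characteristic
`p > 0`, `B = R[x_0, …, x_n]`, and `f 0, …, f (n-1) ∈ B` algebraically independent over
`R` with no `f i` in `R[x_0^p, …, x_n^p]`. If the natural inclusion
`R[f 0, …, f (n-1)] → B` is smooth (formally smooth), then there exists a higher
`R`-derivation on `B` of Jacobian type determined by `F = (f 0, …, f (n-1))`. -/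
theorem stmt5 {R : Type u} [CommRing R] [IsDomain R] (p : ℕ) (hp : 0 < p) [CharP R p]
    {n : ℕ} (f : Fin n → MvPolynomial (Fin (n + 1)) R)
    (hnp : ∀ i, f i ∉ Algebra.adjoin R
      (Set.range fun j : Fin (n + 1) => (X j : MvPolynomial (Fin (n + 1)) R) ^ p))
    (hind : AlgebraicIndependent R f)
    (hsm : Algebra.FormallySmooth (Algebra.adjoin R (Set.range f))
      (MvPolynomial (Fin (n + 1)) R)) :
    ∃ hd : HigherDerivation R (MvPolynomial (Fin (n + 1)) R),
      IsJacobianTypeF p hd f :=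
  stmt5_general p hp f hind hsm
end
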